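/- Let O be a compact 2-orbifold with nonempty boundary (underlying surface of genus g ≥ 0 with b ≥ 1 boundary components and cone points of orders p₁, …, pₖ ≥ 2) with orbifold Euler characteristic χ(O) = 2 - 2g - b - Σᵢ(1 - 1/pᵢ) < 0. If O is not a disk with exactly two cone points, then χ(O) ≤ -1/2. -/
import Mathlib


open Real Finset

/-- A compact 2-orbifold with boundary, negative orbifold Euler characteristic,
and which is not a disk with exactly two cone points, has χ ≤ -1/2. -/
theorem orbifold_chi_le_neg_half
    (g b k : ℕ) (hb : 1 ≤ b) (p : Fin k → ℕ) (hp : ∀ i, 2 ≤ p i)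
    (χ : ℝ)
    (hχ : χ = 2 - 2 * (g : ℝ) - (b : ℝ) - ∑ i, (1 - 1 / (p i : ℝ)))
    (hneg : χ < 0)
    (hnotdisk : ¬(g = 0 ∧ b = 1 ∧ k = 2)) :
    χ ≤ -(1 / 2) := by
  set S := ∑ i, (1 - 1 / (p i : ℝ)) with hSdef
  have hterm : ∀ i ∈ Finset.univ, (1:ℝ)/2 ≤ 1 - 1/(p i : ℝ) := by
    intro i _
    have h2 : (2:ℝ) ≤ (p i : ℝ) := by exact_mod_cast hp i
    have h1 : 1/(p i:ℝ) ≤ 1/2 := by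
      apply one_div_le_one_div_of_le <;> linarith
    linarith
  have hSlb : (k:ℝ)/2 ≤ S := by
    calc (k:ℝ)/2 = ∑ _i : Fin k, (1:ℝ)/2 := by
          simp [Finset.sum_const]; ring
      _ ≤ S := Finset.sum_le_sum hterm
  have hSub : S ≤ k := by
    have hle : ∀ i ∈ Finset.univ, (1 - 1/(p i:ℝ)) ≤ 1 := by
      intro i _
      have h2 : (2:ℝ) ≤ (p i : ℝ) := by exact_mod_cast hp i
      have : (0:ℝ) ≤ 1/(p i:ℝ) := by positivity
      linarith
    calc S ≤ ∑ _i : Fin k, (1:ℝ) := Finset.sum_le_sum hle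
      _ = k := by simp
  have hS0 : (0:ℝ) ≤ S := le_trans (by positivity) hSlb
  by_cases hg : g = 0
  · subst hg
    by_cases hb1 : b = 1
    · subst hb1
      have hk : k ≠ 2 := fun h => hnotdisk ⟨rfl, rfl, h⟩
      have hS1 : 1 < S := by
        simp at hχ; linarith
      have hk2 : (1:ℝ) < k := lt_of_lt_of_le hS1 hSub
      have hk2n : 1 < k := by exact_mod_cast hk2
      have hk3 : 3 ≤ k := by omega
      have hk3' : (3:ℝ) ≤ k := by exact_mod_cast hk3
      rw [hχ]; push_cast; linarith
    · have hb2 : 2 ≤ b := by omega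
      by_cases hk0 : k = 0
      · subst hk0
        have hSz : S = 0 := by simp [hSdef]
        rw [hχ] at hneg
        have h2b : (2:ℝ) < b := by rw [hSz] at hneg; push_cast at hneg; linarith
        have hb3n : 2 < b := by exact_mod_cast h2b
        have hb3 : (3:ℝ) ≤ b := by exact_mod_cast (by omega : 3 ≤ b)
        rw [hχ, hSz]; push_cast; linarith
      · have hk1 : 1 ≤ k := Nat.one_le_iff_ne_zero.mpr hk0
        have : (1:ℝ) ≤ k := by exact_mod_cast hk1
        have hb' : (2:ℝ) ≤ b := by exact_mod_cast hb2
        rw [hχ]; push_cast; linarith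
  · have hg1 : 1 ≤ g := Nat.one_le_iff_ne_zero.mpr hg
    have hg' : (1:ℝ) ≤ g := by exact_mod_cast hg1
    have hb' : (1:ℝ) ≤ b := by exact_mod_cast hb
    rw [hχ]; linarith
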